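/- Let A : [0,1] → ℝ^{n×n} be continuous, B₀, B₁ ∈ ℝ^{n×n}, let Y(t) be the IVP fundamental solution (Y' = AY, Y(0) = I), and set R = B₀ + B₁Y(1). If R is nonsingular, then for any continuous r with r(0) = 0 and any w ∈ ℝⁿ, the function v(t) = Y(t)[R⁻¹B₀∫₀ᵗ Y(s)⁻¹A(s)r(s)ds + (R⁻¹B₀ - I)∫ₜ¹ Y(s)⁻¹A(s)r(s)ds - R⁻¹(B₁r(1) - w)] + r(t) satisfies v(t) = v(0) + ∫₀ᵗ A(s)v(s)ds + r(t) and B₀v(0) + B₁v(1) = w. -/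

import Mathlib

/-!
Splitting `∫ τ..1 = ∫ 0..1 - ∫ 0..τ` writes `v = u + r` with `u τ = Y τ (c + ∫ 0..τ Y⁻¹ A r)` for a
constant vector `c`. By variation of constants `u' = A u + A r = A v`, so the fundamental theorem
of calculus gives the integral equation, and since `u 0 = c` the boundary condition reduces to the
identity `R c = -B₁ Y(1) ∫ 0..1 Y⁻¹ A r - B₁ r(1) + w`, i.e. to `R R⁻¹ = 1`.
-/

open Matrix

attribute [local instance] Matrix.normedAddCommGroup Matrix.normedSpace

section Calculus

variable {𝕜 : Type*} [NontriviallyNormedField 𝕜] {ι κ : Type*}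

theorem HasDerivAt.matrix_mulVec [Fintype κ] {M : 𝕜 → Matrix ι κ 𝕜} {x : 𝕜 → κ → 𝕜}
    {M' : Matrix ι κ 𝕜} {x' : κ → 𝕜} {t : 𝕜} (hM : HasDerivAt M M' t) (hx : HasDerivAt x x' t) :
    HasDerivAt (fun t => M t *ᵥ x t) (M' *ᵥ x t + M t *ᵥ x') t := by
  refine hasDerivAt_pi.2 fun i => ?_
  have hMi := hasDerivAt_pi.1 hM i
  simp only [Pi.add_apply, mulVec, dotProduct, ← Finset.sum_add_distrib]
  exact HasDerivAt.fun_sum fun j _ =>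
    (hasDerivAt_pi.1 hMi j).mul (hasDerivAt_pi.1 hx j)

theorem Continuous.matrix_inv_of_isUnit_det [Fintype ι] [DecidableEq ι] {X : Type*}
    [TopologicalSpace X] {M : X → Matrix ι ι 𝕜} (hM : Continuous M) (hdet : ∀ x, IsUnit (M x).det) :
    Continuous fun x => (M x)⁻¹ :=
  continuous_iff_continuousAt.2 fun x =>
    (continuousAt_matrix_inv _ (by
      simpa [Ring.inverse_eq_inv'] using continuousAt_inv₀ (hdet x).ne_zero)).comp hM.continuousAt

end Calculus

section VariationOfConstants

variable {ι : Type*} [Fintype ι] [DecidableEq ι] {A Y : ℝ → Matrix ι ι ℝ}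

theorem hasDerivAt_mulVec_variationOfConstants (hY : ∀ t, HasDerivAt Y (A t * Y t) t)
    (hYdet : ∀ t, IsUnit (Y t).det) {g : ℝ → ι → ℝ} (hg : Continuous g) (c : ι → ℝ) (t : ℝ) :
    HasDerivAt (fun t => Y t *ᵥ (c + ∫ s in (0 : ℝ)..t, (Y s)⁻¹ *ᵥ g s))
      (A t *ᵥ (Y t *ᵥ (c + ∫ s in (0 : ℝ)..t, (Y s)⁻¹ *ᵥ g s)) + g t) t := by
  have hYc : Continuous Y := continuous_iff_continuousAt.2 fun t => (hY t).continuousAt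
  have hf : Continuous fun s => (Y s)⁻¹ *ᵥ g s :=
    (hYc.matrix_inv_of_isUnit_det hYdet).matrix_mulVec hg
  have hint : HasDerivAt (fun t => c + ∫ s in (0 : ℝ)..t, (Y s)⁻¹ *ᵥ g s) ((Y t)⁻¹ *ᵥ g t) t :=
    (intervalIntegral.integral_hasDerivAt_right (hf.intervalIntegrable 0 t)
      (hf.stronglyMeasurableAtFilter _ _) hf.continuousAt).const_add c
  convert (hY t).matrix_mulVec hint using 1
  rw [mulVec_mulVec, mulVec_mulVec, mul_nonsing_inv _ (hYdet t), one_mulVec]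

end VariationOfConstants

theorem mulVec_boundary_eq {K ι : Type*} [CommRing K] [Fintype ι] [DecidableEq ι]
    {B₀ B₁ Y₁ R : Matrix ι ι K} (hR : R = B₀ + B₁ * Y₁) (hRdet : IsUnit R.det)
    (I p w : ι → K) :
    B₀ *ᵥ ((R⁻¹ * B₀ - 1) *ᵥ I - R⁻¹ *ᵥ (B₁ *ᵥ p - w)) +
      B₁ *ᵥ (Y₁ *ᵥ ((R⁻¹ * B₀ - 1) *ᵥ I - R⁻¹ *ᵥ (B₁ *ᵥ p - w) + I) + p) = w := by
  set c := (R⁻¹ * B₀ - 1) *ᵥ I - R⁻¹ *ᵥ (B₁ *ᵥ p - w)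
  have hRc : R *ᵥ c = (B₀ - R) *ᵥ I - (B₁ *ᵥ p - w) := by
    simp only [c, mulVec_sub, mulVec_mulVec, Matrix.mul_sub, ← Matrix.mul_assoc,
      mul_nonsing_inv _ hRdet, Matrix.one_mul, Matrix.mul_one, one_mulVec]
  rw [hR, sub_add_cancel_left, add_mulVec, neg_mulVec, ← mulVec_mulVec, ← mulVec_mulVec] at hRc
  rw [mulVec_add, mulVec_add, mulVec_add]
  linear_combination hRc

theorem stmt_12 {n : ℕ} (A : ℝ → Matrix (Fin n) (Fin n) ℝ) (hA : Continuous A)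
    (B₀ B₁ : Matrix (Fin n) (Fin n) ℝ)
    (Y : ℝ → Matrix (Fin n) (Fin n) ℝ)
    (hY : ∀ τ : ℝ, HasDerivAt Y (A τ * Y τ) τ) (hY0 : Y 0 = 1)
    (hYinv : ∀ τ : ℝ, IsUnit (Y τ).det)
    (R : Matrix (Fin n) (Fin n) ℝ) (hR : R = B₀ + B₁ * Y 1) (hRinv : IsUnit R.det)
    (r : ℝ → Fin n → ℝ) (hr : Continuous r) (hr0 : r 0 = 0)
    (w : Fin n → ℝ) (v : ℝ → Fin n → ℝ)
    (hv : ∀ τ : ℝ, v τ =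
      Y τ *ᵥ ((R⁻¹ * B₀) *ᵥ (∫ s in (0:ℝ)..τ, (Y s)⁻¹ *ᵥ (A s *ᵥ r s))
        + (R⁻¹ * B₀ - 1) *ᵥ (∫ s in τ..(1:ℝ), (Y s)⁻¹ *ᵥ (A s *ᵥ r s))
        - R⁻¹ *ᵥ (B₁ *ᵥ r 1 - w)) + r τ) :
    (∀ τ ∈ Set.Icc (0:ℝ) 1, v τ = v 0 + (∫ s in (0:ℝ)..τ, A s *ᵥ v s) + r τ) ∧
    B₀ *ᵥ v 0 + B₁ *ᵥ v 1 = w := by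
  have hYc : Continuous Y := continuous_iff_continuousAt.2 fun τ => (hY τ).continuousAt
  set f : ℝ → Fin n → ℝ := fun s => (Y s)⁻¹ *ᵥ (A s *ᵥ r s)
  have hf : Continuous f :=
    (hYc.matrix_inv_of_isUnit_det hYinv).matrix_mulVec (hA.matrix_mulVec hr)
  set c := (R⁻¹ * B₀ - 1) *ᵥ (∫ s in (0:ℝ)..1, f s) - R⁻¹ *ᵥ (B₁ *ᵥ r 1 - w)
  set u : ℝ → Fin n → ℝ := fun τ => Y τ *ᵥ (c + ∫ s in (0:ℝ)..τ, f s)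
  have hvu : ∀ τ, v τ = u τ + r τ := fun τ => by
    rw [hv τ, ← intervalIntegral.integral_interval_sub_left (hf.intervalIntegrable 0 1)
      (hf.intervalIntegrable 0 τ)]
    congr 2
    simp only [c, mulVec_sub, sub_mulVec, one_mulVec]
    abel
  have hu0 : u 0 = c := by simp [u, hY0]
  have hu' : ∀ τ, HasDerivAt u (A τ *ᵥ v τ) τ := fun τ => by
    convert hasDerivAt_mulVec_variationOfConstants hY hYinv (hA.matrix_mulVec hr) c τ using 1
    rw [hvu, mulVec_add]
  have hvc : Continuous v := by
    have hu : Continuous u := continuous_iff_continuousAt.2 fun τ => (hu' τ).continuousAt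
    rw [show v = fun τ => u τ + r τ from funext hvu]
    exact hu.add hr
  have hint : ∀ τ, ∫ s in (0:ℝ)..τ, A s *ᵥ v s = u τ - u 0 := fun τ =>
    intervalIntegral.integral_eq_sub_of_hasDerivAt (fun s _ => hu' s)
      ((hA.matrix_mulVec hvc).intervalIntegrable _ _)
  have hv0 : v 0 = c := by rw [hvu, hu0, hr0, add_zero]
  refine ⟨fun τ _ => ?_, ?_⟩
  · rw [hint, hvu τ, hv0, hu0]
    abel
  · rw [hv0, hvu 1]
    exact mulVec_boundary_eq hR hRinv _ _ _
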